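/- Let A be a finite nonempty alphabet, let C be a finite maximal prefix code over A, and let x = ⟨x₁, x₂, …⟩ ∈ A^ℕ. Then ∑_{c = ⟨c₁,…,c_n⟩ ∈ C} 2^{|{i ∈ {1,…,n} : c_i ≠ x_i}|} · (1/(2|A| − 1))^{len(c)} = 1. -/
import Mathlib


variable {A : Type*}

/-- A prefix code: no element is a (proper) prefix of another element. -/
def IsPrefixCode (C : Set (List A)) : Prop :=
  ∀ p ∈ C, ∀ q ∈ C, p <+: q → p = q

/-- A maximal prefix code: a prefix code not strictly contained in any prefix code. -/
def IsMaximalPrefixCode (C : Set (List A)) : Prop :=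
  IsPrefixCode C ∧ ∀ D : Set (List A), IsPrefixCode D → C ⊆ D → D = C

section Aux

set_option linter.unusedSectionVars false

variable [Fintype A] [Nonempty A] [DecidableEq A]

noncomputable def pcw (x : ℕ → A) (c : List A) : ℝ :=
  (2 : ℝ) ^ (Finset.univ.filter fun i : Fin c.length => c.get i ≠ x i.val).card *
    (1 / (2 * (Fintype.card A : ℝ) - 1)) ^ c.length

lemma pcw_nil (x : ℕ → A) : pcw x [] = 1 := by
  simp [pcw]

lemma pcw_cons (x : ℕ → A) (a : A) (t : List A) :
    pcw x (a :: t) = (if a = x 0 then 1 else 2) * (1 / (2 * (Fintype.card A : ℝ) - 1)) *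
      pcw (fun n => x (n + 1)) t := by
  have hcard : (Finset.univ.filter fun i : Fin (a :: t).length => (a :: t).get i ≠ x i.val).card
      = (if a = x 0 then 0 else 1) +
        (Finset.univ.filter fun i : Fin t.length => t.get i ≠ x (i.val + 1)).card := by
    rw [Finset.card_filter, Finset.card_filter]
    rw [show (∑ i ∈ Finset.univ, if (a :: t).get i ≠ x i.val then 1 else 0) =
        ∑ i : Fin (t.length + 1), if (a :: t).get i ≠ x i.val then 1 else 0 from rfl,
      Fin.sum_univ_succ]
    congr 1
    by_cases h : a = x 0 <;> simp [h]
  rw [pcw, pcw, hcard, pow_add]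
  by_cases h : a = x 0 <;>
    simp [h, pow_succ, mul_inv, List.length_cons] <;> ring

end Aux

section Aux2
set_option linter.unusedSectionVars false
variable [Fintype A] [Nonempty A] [DecidableEq A]

lemma prefixCode_nil_mem {C : Set (List A)} (hC : IsPrefixCode C) (h : [] ∈ C) :
    C = {[]} := by
  ext c
  constructor
  · intro hc
    have := hC [] h c hc (List.nil_prefix)
    simp [← this]
  · rintro rfl; exact h

def tails (C : Finset (List A)) (a : A) : Finset (List A) :=
  (C.filter fun c => c.head? = some a).image List.tail

lemma mem_tails {C : Finset (List A)} {a : A} {t : List A} :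
    t ∈ tails C a ↔ a :: t ∈ C := by
  simp only [tails, Finset.mem_image, Finset.mem_filter]
  constructor
  · rintro ⟨c, ⟨hc, hh⟩, rfl⟩
    cases c with
    | nil => simp at hh
    | cons b l =>
      simp only [List.head?_cons, Option.some.injEq] at hh
      subst hh; simpa using hc
  · intro h; exact ⟨a :: t, ⟨h, rfl⟩, rfl⟩

lemma exists_cons_mem {C : Finset (List A)} (hmax : IsMaximalPrefixCode (↑C : Set (List A)))
    (hnil : [] ∉ C) (a : A) : ∃ t, a :: t ∈ C := by
  by_contra h
  push_neg at h
  have hpc : IsPrefixCode (↑C ∪ {[a]} : Set (List A)) := by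
    rintro p (hp | hp) q (hq | hq) hpq
    · exact hmax.1 p hp q hq hpq
    · simp only [Set.mem_singleton_iff] at hq; subst hq
      cases p with
      | nil => exact absurd hp hnil
      | cons b l =>
        obtain ⟨rfl, hl⟩ := List.cons_prefix_cons.1 hpq
        have : l = [] := List.prefix_nil.1 hl
        subst this
        exact absurd hp (h [])
    · simp only [Set.mem_singleton_iff] at hp; subst hp
      exfalso
      cases q with
      | nil => exact absurd hq hnil
      | cons b l =>
        obtain ⟨rfl, _⟩ := List.cons_prefix_cons.1 hpq
        exact h l hq
    · simp only [Set.mem_singleton_iff] at hp hq; rw [hp, hq]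
  have heq := hmax.2 _ hpc Set.subset_union_left
  have : ([a] : List A) ∈ (↑C : Set (List A)) := heq ▸ Set.mem_union_right _ rfl
  exact h [] this

lemma tails_maximal {C : Finset (List A)} (hmax : IsMaximalPrefixCode (↑C : Set (List A)))
    (hnil : [] ∉ C) (a : A) : IsMaximalPrefixCode (↑(tails C a) : Set (List A)) := by
  constructor
  · intro p hp q hq hpq
    have := hmax.1 (a :: p) (mem_tails.1 hp) (a :: q) (mem_tails.1 hq)
      (List.cons_prefix_cons.2 ⟨rfl, hpq⟩)
    exact (List.cons.injEq _ _ _ _ ▸ this).2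
  · intro D hD hsub
    set D' : Set (List A) := {c | c ∈ C ∧ c.head? ≠ some a} ∪ (fun t => a :: t) '' D with hD'def
    have hD' : IsPrefixCode D' := by
      rintro p (⟨hp, hph⟩ | ⟨tp, htp, rfl⟩) q (⟨hq, hqh⟩ | ⟨tq, htq, rfl⟩) hpq
      · exact hmax.1 p hp q hq hpq
      · exfalso
        cases p with
        | nil => exact hnil hp
        | cons b l =>
          obtain ⟨rfl, _⟩ := List.cons_prefix_cons.1 hpq
          exact hph (by simp)
      · exfalso
        cases q with
        | nil => exact hnil hq
        | cons b l =>
          obtain ⟨rfl, _⟩ := List.cons_prefix_cons.1 hpq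
          exact hqh (by simp)
      · obtain ⟨-, h⟩ := List.cons_prefix_cons.1 hpq
        rw [hD tp htp tq htq h]
    have hsub' : (↑C : Set (List A)) ⊆ D' := by
      intro c hc
      by_cases hh : c.head? = some a
      · right
        cases c with
        | nil => simp at hh
        | cons b l =>
          simp only [List.head?_cons, Option.some.injEq] at hh
          subst hh
          exact ⟨l, hsub (Finset.mem_coe.2 (mem_tails.2 hc)), rfl⟩
      · left; exact ⟨hc, hh⟩
    have hDC := hmax.2 D' hD' hsub'
    apply Set.Subset.antisymm _ hsub
    intro t ht
    have h1 : a :: t ∈ D' := Or.inr ⟨t, ht, rfl⟩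
    rw [hDC] at h1
    exact Finset.mem_coe.2 (mem_tails.2 h1)

lemma maximal_nonempty {C : Finset (List A)} (hmax : IsMaximalPrefixCode (↑C : Set (List A))) :
    C.Nonempty := by
  rcases C.eq_empty_or_nonempty with rfl | h
  · exfalso
    have hpc : IsPrefixCode ({[]} : Set (List A)) := by rintro p rfl q rfl _; rfl
    have h2 := hmax.2 {[]} hpc (by simp)
    simpa using h2.le (Set.mem_singleton _)
  · exact h

end Aux2

section Main
set_option linter.unusedSectionVars false
variable [Fintype A] [Nonempty A] [DecidableEq A]

lemma pcw_sum (n : ℕ) : ∀ (C : Finset (List A)), C.sum List.length = n →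
    IsMaximalPrefixCode (↑C : Set (List A)) → ∀ x : ℕ → A, ∑ c ∈ C, pcw x c = 1 := by
  induction n using Nat.strong_induction_on with
  | _ n ih =>
    intro C hn hmax x
    by_cases hnil : [] ∈ C
    · have hCeq : C = {[]} := Finset.coe_injective (by
        rw [prefixCode_nil_mem hmax.1 (Finset.mem_coe.2 hnil)]; simp)
      rw [hCeq]
      simp [pcw_nil]
    · have hC : C = Finset.univ.biUnion (fun a => (tails C a).image (a :: ·)) := by
        ext c
        simp only [Finset.mem_biUnion, Finset.mem_univ, true_and, Finset.mem_image]
        constructor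
        · intro hc
          cases c with
          | nil => exact absurd hc hnil
          | cons b l => exact ⟨b, l, mem_tails.2 hc, rfl⟩
        · rintro ⟨b, t, ht, rfl⟩; exact mem_tails.1 ht
      have hdisj : (↑(Finset.univ : Finset A) : Set A).PairwiseDisjoint
          (fun a => (tails C a).image (a :: ·)) := by
        intro a _ b _ hab
        simp only [Finset.disjoint_left, Finset.mem_image]
        rintro c ⟨t, _, rfl⟩ ⟨s, _, hs⟩
        exact hab (List.cons.injEq _ _ _ _ ▸ hs).1.symm
      have hinj : ∀ a : A, Set.InjOn (a :: ·) ↑(tails C a) := by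
        intro a t _ s _ h
        exact (List.cons.injEq _ _ _ _ ▸ h).2
      -- sums over tails
      have hsub : ∀ a : A, ((tails C a).image (a :: ·)) ⊆ C := by
        intro a c hc
        obtain ⟨t, ht, rfl⟩ := Finset.mem_image.1 hc
        exact mem_tails.1 ht
      have hlt : ∀ a : A, (tails C a).sum List.length < n := by
        intro a
        obtain ⟨t0, ht0⟩ := exists_cons_mem hmax hnil a
        have hne : (tails C a).Nonempty := ⟨t0, mem_tails.2 ht0⟩
        have h1 : ((tails C a).image (a :: ·)).sum List.length ≤ n := by
          rw [← hn]
          exact Finset.sum_le_sum_of_subset (hsub a)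
        rw [Finset.sum_image (fun t ht s hs h => hinj a ht hs h)] at h1
        have h2 : ∑ t ∈ tails C a, (a :: t).length
            = (tails C a).sum List.length + (tails C a).card := by
          simp [List.length_cons, Finset.sum_add_distrib]
        rw [h2] at h1
        have := Finset.card_pos.2 hne
        omega
      have hIH : ∀ a : A, ∑ t ∈ tails C a, pcw (fun m => x (m + 1)) t = 1 := by
        intro a
        exact ih _ (hlt a) (tails C a) rfl (tails_maximal hmax hnil a) _
      rw [hC, Finset.sum_biUnion hdisj]
      have hstep : ∀ a : A, ∑ c ∈ (tails C a).image (a :: ·), pcw x c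
          = (if a = x 0 then 1 else 2) * (1 / (2 * (Fintype.card A : ℝ) - 1)) := by
        intro a
        rw [Finset.sum_image (fun t ht s hs h => hinj a ht hs h)]
        calc ∑ t ∈ tails C a, pcw x (a :: t)
            = ∑ t ∈ tails C a, (if a = x 0 then 1 else 2) *
                (1 / (2 * (Fintype.card A : ℝ) - 1)) * pcw (fun m => x (m + 1)) t := by
              exact Finset.sum_congr rfl fun t _ => pcw_cons x a t
          _ = (if a = x 0 then 1 else 2) * (1 / (2 * (Fintype.card A : ℝ) - 1)) *
                ∑ t ∈ tails C a, pcw (fun m => x (m + 1)) t := by rw [Finset.mul_sum]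
          _ = _ := by rw [hIH a, mul_one]
      simp only [hstep]
      have hk : (1 : ℝ) ≤ (Fintype.card A : ℝ) := by
        exact_mod_cast Fintype.card_pos
      have hk0 : (2 * (Fintype.card A : ℝ) - 1) ≠ 0 := by linarith
      have hsum2 : ∑ a : A, (if a = x 0 then (1 : ℝ) else 2)
          = 2 * (Fintype.card A : ℝ) - 1 := by
        have : ∀ a : A, (if a = x 0 then (1 : ℝ) else 2)
            = 2 - (if a = x 0 then (1 : ℝ) else 0) := by
          intro a; by_cases h : a = x 0 <;> simp [h] <;> norm_num
        simp only [this]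
        rw [Finset.sum_sub_distrib, Finset.sum_ite_eq' Finset.univ (x 0) (fun _ => (1 : ℝ))]
        simp [Finset.card_univ, mul_comm]
      rw [← Finset.sum_mul, hsum2]
      field_simp
  end Main

/-- For any finite maximal prefix code `C` and any `x ∈ A^ℕ`,
`∑_{c ∈ C} 2^{#{i : cᵢ ≠ xᵢ}} · (1/(2|A|−1))^{len(c)} = 1`. -/
theorem maximalPrefixCode_weighted_sum_eq_one [Fintype A] [Nonempty A] [DecidableEq A]
    (C : Finset (List A)) (hmax : IsMaximalPrefixCode (↑C : Set (List A)))
    (x : ℕ → A) :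
    ∑ c ∈ C, (2 : ℝ) ^ (Finset.univ.filter fun i : Fin c.length =>
        c.get i ≠ x i.val).card *
      (1 / (2 * (Fintype.card A : ℝ) - 1)) ^ c.length = 1 := by
  exact pcw_sum (C.sum List.length) C rfl hmax x
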